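/- arXiv:1704.00152 — 2 statements merged into one kernel-verified Lean document; each statement's English description precedes it below -/
import Mathlib

section
/- Let G = G_1 ∘ G_2 (removing leaves f_1, f_2 whose neighbours v_1, v_2 have degree ≥ 3 and identifying v_1 = v_2 = v). If both G_1 and G_2 satisfy c_{G_i}(S) = |S| + 1 for all cut sets S, and for i = 1, 2 there exists u_i ∈ N_{G_i}(v) with deg_{G_i}(u_i) = 2, then G satisfies c_G(S) = |S| + 1 for all cut sets S of G. -/
open SimpleGraph Finset

/-- Number of connected components of the subgraph of `G` induced on the complement of `S`. -/
noncomputable def numComp {V : Type*} [Fintype V] (G : SimpleGraph V) (S : Finset V) : ℕ :=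
  Nat.card (G.induce ((↑S : Set V)ᶜ)).ConnectedComponent

/-- `S` is a cut set of `G`. -/
def IsCutSet {V : Type*} [Fintype V] [DecidableEq V] (G : SimpleGraph V) (S : Finset V) : Prop :=
  S = ∅ ∨ (S ≠ ∅ ∧ ∀ i ∈ S, numComp G (S.erase i) < numComp G S)

/-- The combinatorial condition equivalent to unmixedness of the binomial edge ideal. -/
def Unmixed {V : Type*} [Fintype V] [DecidableEq V] (G : SimpleGraph V) : Prop :=
  ∀ S : Finset V, IsCutSet G S → numComp G S = S.card + 1

/-- Vertex set of `(G₁,f₁) ∘ (G₂,f₂)`: the leaves `f₁, f₂` are removed and `v₁` is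
identified with `v₂` (the copy of `v₂` is dropped, `v₁` playing the role of `v`). -/
abbrev GlueV {V₁ V₂ : Type*} (f1 : V₁) (f2 v2 : V₂) : Type _ :=
  {x : V₁ // x ≠ f1} ⊕ {x : V₂ // x ≠ f2 ∧ x ≠ v2}

/-- The graph `(G₁,f₁) ∘ (G₂,f₂)`. -/
def glueGraph {V₁ V₂ : Type*} (Γ1 : SimpleGraph V₁) (Γ2 : SimpleGraph V₂)
    (f1 v1 : V₁) (f2 v2 : V₂) : SimpleGraph (GlueV f1 f2 v2) :=
  SimpleGraph.fromRel (fun x y =>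
    match x, y with
    | Sum.inl a, Sum.inl b => Γ1.Adj a.1 b.1
    | Sum.inr a, Sum.inr b => Γ2.Adj a.1 b.1
    | Sum.inl a, Sum.inr b => a.1 = v1 ∧ Γ2.Adj v2 b.1
    | Sum.inr a, Sum.inl b => b.1 = v1 ∧ Γ2.Adj v2 a.1)

/-- The subset of `V₁` corresponding to a set of vertices of the glued graph
(`S ∩ V(G₁)`, with `v` read as `v₁`). -/
def leftPart {V₁ V₂ : Type*} [DecidableEq V₁] {f1 : V₁} {f2 v2 : V₂}
    (S : Finset (GlueV f1 f2 v2)) : Finset V₁ :=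
  S.biUnion (fun z => match z with
    | Sum.inl a => {a.1}
    | Sum.inr _ => (∅ : Finset V₁))

/-- The subset of `V₂` corresponding to a set of vertices of the glued graph
(`S ∩ V(G₂)`, with `v` read as `v₂`). -/
def rightPart {V₁ V₂ : Type*} [DecidableEq V₁] [DecidableEq V₂] (v1 : V₁) {f1 : V₁}
    {f2 v2 : V₂} (S : Finset (GlueV f1 f2 v2)) : Finset V₂ :=
  S.biUnion (fun z => match z with
    | Sum.inl a => if a.1 = v1 then {v2} else (∅ : Finset V₂)
    | Sum.inr b => {b.1})

/-- The subset of the glued graph corresponding to a subset `S1 ⊆ V₁`. -/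
def liftLeft {V₁ V₂ : Type*} [DecidableEq V₁] [DecidableEq V₂] {f1 : V₁} {f2 v2 : V₂}
    (S1 : Finset V₁) : Finset (GlueV f1 f2 v2) :=
  S1.biUnion (fun a => if h : a ≠ f1 then {Sum.inl ⟨a, h⟩} else ∅)

/-- The subset of the glued graph corresponding to a subset `S2 ⊆ V₂`
(`v₂` being read as `v`, i.e. as `v₁`). -/
def liftRight {V₁ V₂ : Type*} [DecidableEq V₁] [DecidableEq V₂] {f1 v1 : V₁} {f2 v2 : V₂}
    (hne1 : v1 ≠ f1) (S2 : Finset V₂) : Finset (GlueV f1 f2 v2) :=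
  S2.biUnion (fun b =>
    if h : b ≠ f2 ∧ b ≠ v2 then {Sum.inr ⟨b, h⟩}
    else if b = v2 then {Sum.inl ⟨v1, hne1⟩} else ∅)

/-!
For `S ⊆ V(G)` let `S₁ ⊆ V(G₁)` and `S₂ ⊆ V(G₂)` be its traces, `v` being read as `v₁` and as
`v₂`. Deleting `S` from `G` leaves `G₁ - S₁ - f₁` and `G₂ - S₂ - f₂`, disjoint if `v ∈ S` and glued
at `v` otherwise; as `f_i` is a leaf at `v_i`, this gives
`c_G(S) + 1 + [v ∈ S] = c_{G₁}(S₁) + c_{G₂}(S₂)`, while `|S₁| + |S₂| = |S| + [v ∈ S]`.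

If `S` is a cut set, so are `S₁` and `S₂`. A vertex of `S₁` other than `v₁` is a vertex of `S`
whose removal from `S` changes only the first summand. If `v₁ ∈ S₁`, then `u₁ ∉ S`, because every
vertex of a cut set has two neighbours outside it and `u₁` has only one besides `v`; so putting `v₁`
back joins the isolated leaf `f₁` to the component of `u₁`. Unmixedness of `G₁` and `G₂` now
gives `c_G(S) = |S| + 1`.
-/

open SimpleGraph.ConnectedComponent (connectedComponentMk_eq_of_adj)

namespace SimpleGraph

variable {W X : Type*} {H : SimpleGraph W}

theorem Reachable.eq_of_forall_adj {g : W → X} (hg : ∀ a b, H.Adj a b → g a = g b) {a b : W}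
    (h : H.Reachable a b) : g a = g b := by
  rw [reachable_iff_reflTransGen] at h
  induction h with
  | refl => rfl
  | tail _ hbc ih => exact ih.trans (hg _ _ hbc)

theorem card_connectedComponent_eq_of_fibers (g : W → X) (hadj : ∀ a b, H.Adj a b → g a = g b)
    (hreach : ∀ a b, g a = g b → H.Reachable a b) (hg : Function.Surjective g) :
    Nat.card H.ConnectedComponent = Nat.card X := by
  refine Nat.card_eq_of_bijective
    (ConnectedComponent.lift g fun a b p _ => Reachable.eq_of_forall_adj hadj ⟨p⟩) ⟨?_, ?_⟩
  · rintro ⟨a⟩ ⟨b⟩ h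
    exact ConnectedComponent.sound (hreach a b h)
  · intro x
    obtain ⟨w, rfl⟩ := hg x
    exact ⟨H.connectedComponentMk w, rfl⟩

end SimpleGraph

section MergeRight

variable {α β : Type*} [DecidableEq β] (a₀ : α) (b₀ : β)

/-- The quotient map `β → (α ⊕ β) / (inr b₀ ∼ inl a₀)`, the quotient being realised as the
complement of `inr b₀`. -/
def mergeRight (b : β) : {c : α ⊕ β // c ≠ .inr b₀} :=
  if h : b = b₀ then ⟨.inl a₀, Sum.inl_ne_inr⟩ else ⟨.inr b, by simpa using h⟩

theorem mergeRight_self : mergeRight a₀ b₀ b₀ = ⟨.inl a₀, Sum.inl_ne_inr⟩ :=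
  dif_pos rfl

theorem mergeRight_injective : Function.Injective (mergeRight a₀ b₀) := by
  intro b b' h
  replace h := congrArg Subtype.val h
  by_cases hb : b = b₀ <;> by_cases hb' : b' = b₀ <;> simp_all [mergeRight]

theorem inl_eq_mergeRight_iff {a : α} {b : β} :
    ⟨.inl a, Sum.inl_ne_inr⟩ = mergeRight a₀ b₀ b ↔ a = a₀ ∧ b = b₀ := by
  by_cases hb : b = b₀ <;> simp [mergeRight, hb, Subtype.ext_iff, eq_comm]

end MergeRight

section Degree

variable {V : Type*} {G : SimpleGraph V} {u v : V}

theorem adj_iff_eq_of_degree_eq_one [Fintype (G.neighborSet u)] (h : G.degree u = 1)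
    (huv : G.Adj u v) (x : V) : G.Adj u x ↔ x = v :=
  ⟨fun hx => (degree_eq_one_iff_existsUnique_adj.1 h).unique hx huv, fun e => e ▸ huv⟩

theorem eq_of_adj_of_degree_eq_two [DecidableEq V] [Fintype (G.neighborSet u)] {x y : V}
    (h : G.degree u = 2) (hv : G.Adj u v) (hx : G.Adj u x) (hy : G.Adj u y) (hxv : x ≠ v)
    (hyv : y ≠ v) : x = y := by
  by_contra hxy
  have hsub : ({v, x, y} : Finset V) ⊆ G.neighborFinset u := by
    simp [insert_subset_iff, hv, hx, hy]
  have := card_le_card hsub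
  rw [card_neighborFinset_eq_degree, h, card_insert_of_notMem (by simp [hxv.symm, hyv.symm]),
    card_pair hxy] at this
  omega

end Degree

section VertexDeletion

variable {V : Type*} [DecidableEq V] {G : SimpleGraph V} {S : Finset V} {u f w : V}

theorem compl_subset_compl_erase (S : Finset V) (u : V) :
    ((↑S : Set V)ᶜ) ⊆ ((↑(S.erase u) : Set V)ᶜ) :=
  Set.compl_subset_compl.2 (by simp)

variable [Fintype V]

theorem numComp_erase_eq_add_one (hu : u ∈ S) (hnbr : ∀ x, G.Adj u x → x ∈ S) :
    numComp G (S.erase u) = numComp G S + 1 := by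
  let g : ((↑(S.erase u) : Set V)ᶜ : Set V) →
      Option (G.induce ((↑S : Set V)ᶜ)).ConnectedComponent :=
    fun z => if h : z.1 ∈ S then none else some (G.induce _ |>.connectedComponentMk ⟨z, h⟩)
  rw [numComp, card_connectedComponent_eq_of_fibers g, Finite.card_option, numComp]
  · rintro ⟨a, ha⟩ ⟨b, hb⟩ (hab : G.Adj a b)
    by_cases haS : a ∈ S <;> by_cases hbS : b ∈ S
    · simp [g, haS, hbS]
    · obtain rfl := Finset.eq_of_mem_of_notMem_erase haS ha
      exact absurd (hnbr b hab) hbS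
    · obtain rfl := Finset.eq_of_mem_of_notMem_erase hbS hb
      exact absurd (hnbr a hab.symm) haS
    · simp only [g, dif_neg haS, dif_neg hbS, Option.some.injEq]
      exact connectedComponentMk_eq_of_adj (G := G.induce _) hab
  · rintro ⟨a, ha⟩ ⟨b, hb⟩ h
    by_cases haS : a ∈ S <;> by_cases hbS : b ∈ S <;>
      simp only [g, haS, hbS, ↓reduceDIte, reduceCtorEq, Option.some.injEq,
        ConnectedComponent.eq] at h
    · obtain rfl := Finset.eq_of_mem_of_notMem_erase haS ha
      obtain rfl := Finset.eq_of_mem_of_notMem_erase hbS hb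
      rfl
    · exact h.map (G.induceHomOfLE (compl_subset_compl_erase S u)).toHom
  · rintro (_ | c)
    · exact ⟨⟨u, by simp⟩, by simp [g, hu]⟩
    · induction c using ConnectedComponent.ind with | h x =>
      exact ⟨⟨x, compl_subset_compl_erase S u x.2⟩, by simp [g, show x.1 ∉ S from x.2]⟩

theorem numComp_erase_eq (hu : u ∈ S) (hw : w ∉ S) (huw : G.Adj u w)
    (hnbr : ∀ x ∉ S, G.Adj u x → x = w) : numComp G (S.erase u) = numComp G S := by
  let ι := G.induceHomOfLE (compl_subset_compl_erase S u)
  let g : ((↑(S.erase u) : Set V)ᶜ : Set V) → (G.induce ((↑S : Set V)ᶜ)).ConnectedComponent :=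
    fun z => if h : z.1 ∈ S then G.induce _ |>.connectedComponentMk ⟨w, hw⟩
      else G.induce _ |>.connectedComponentMk ⟨z, h⟩
  have hrep : ∀ z, ∃ y, g z = (G.induce _).connectedComponentMk y ∧
      (G.induce ((↑(S.erase u) : Set V)ᶜ)).Reachable z (ι y) := by
    rintro ⟨z, hz⟩
    by_cases hzS : z ∈ S
    · obtain rfl := Finset.eq_of_mem_of_notMem_erase hzS hz
      exact ⟨⟨w, hw⟩, by simp [g, hzS], Adj.reachable (G := G.induce _) huw⟩
    · exact ⟨⟨z, hzS⟩, by simp [g, hzS], Reachable.refl _⟩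
  rw [numComp, card_connectedComponent_eq_of_fibers g, numComp]
  · rintro ⟨a, ha⟩ ⟨b, hb⟩ (hab : G.Adj a b)
    by_cases haS : a ∈ S <;> by_cases hbS : b ∈ S
    · simp [g, haS, hbS]
    · obtain rfl := Finset.eq_of_mem_of_notMem_erase haS ha
      obtain rfl := hnbr b hbS hab
      simp [g, haS, hbS]
    · obtain rfl := Finset.eq_of_mem_of_notMem_erase hbS hb
      obtain rfl := hnbr a haS hab.symm
      simp [g, haS, hbS]
    · simp only [g, dif_neg haS, dif_neg hbS]
      exact connectedComponentMk_eq_of_adj (G := G.induce _) hab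
  · intro a b h
    obtain ⟨ya, hga, hya⟩ := hrep a
    obtain ⟨yb, hgb, hyb⟩ := hrep b
    rw [hga, hgb, ConnectedComponent.eq] at h
    exact hya.trans ((h.map ι.toHom).trans hyb.symm)
  · intro c
    induction c using ConnectedComponent.ind with | h x =>
    exact ⟨ι x, by simp [g, ι, show x.1 ∉ S from x.2]⟩

theorem numComp_erase_lt {x y : V} (hu : u ∈ S) (hx : x ∉ S) (hy : y ∉ S) (hux : G.Adj u x)
    (huy : G.Adj u y) (hxy : ¬ (G.induce ((↑S : Set V)ᶜ)).Reachable ⟨x, hx⟩ ⟨y, hy⟩) :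
    numComp G (S.erase u) < numComp G S := by
  let ι := G.induceHomOfLE (compl_subset_compl_erase S u)
  let φ := ConnectedComponent.map ι.toHom
  have hu' : u ∈ ((↑(S.erase u) : Set V)ᶜ) := by simp
  have hsurj : Function.Surjective φ := by
    intro c
    induction c using ConnectedComponent.ind with | h z =>
    obtain ⟨z, hz⟩ := z
    by_cases hzS : z ∈ S
    · obtain rfl := Finset.eq_of_mem_of_notMem_erase hzS hz
      exact ⟨(G.induce _).connectedComponentMk ⟨x, hx⟩,
        connectedComponentMk_eq_of_adj (G := G.induce _) (w := ⟨z, hz⟩) hux.symm⟩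
    · exact ⟨(G.induce _).connectedComponentMk ⟨z, hzS⟩, rfl⟩
  have hninj : ¬ Function.Injective φ := fun hinj => hxy <| ConnectedComponent.eq.1 <| hinj <|
    ConnectedComponent.eq.2 <|
      (Adj.reachable (G := G.induce _) (u := ⟨u, hu'⟩) (v := ι ⟨x, hx⟩) hux).symm.trans
      (Adj.reachable (G := G.induce _) (u := ⟨u, hu'⟩) (v := ι ⟨y, hy⟩) huy)
  exact lt_of_not_ge fun h => hninj (hsurj.bijective_of_nat_card_le h).1

theorem numComp_insert_leaf_of_notMem (hf : f ∉ S) (hw : w ∉ S)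
    (hleaf : ∀ x, G.Adj f x ↔ x = w) : numComp G (insert f S) = numComp G S := by
  have hfw : G.Adj f w := (hleaf w).2 rfl
  have h := numComp_erase_eq (mem_insert_self f S) (by simp [hw, hfw.ne.symm]) hfw
    fun x _ hx => (hleaf x).1 hx
  rwa [erase_insert hf, eq_comm] at h

theorem numComp_insert_leaf_of_mem (hf : f ∉ S) (hw : w ∈ S) (hleaf : ∀ x, G.Adj f x ↔ x = w) :
    numComp G S = numComp G (insert f S) + 1 := by
  have h := numComp_erase_eq_add_one (mem_insert_self f S)
    fun x hx => (hleaf x).1 hx ▸ mem_insert_of_mem hw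
  rwa [erase_insert hf] at h

theorem numComp_erase_lt_of_leaf (hw : w ∈ S) (hf : f ∉ S) (hu : u ∉ S)
    (hleaf : ∀ x, G.Adj f x ↔ x = w) (hwu : G.Adj w u) (hfu : f ≠ u) :
    numComp G (S.erase w) < numComp G S :=
  numComp_erase_lt hw hf hu ((hleaf w).2 rfl).symm hwu <|
    not_reachable_of_neighborSet_left_eq_empty (by simpa using hfu) <|
      Set.eq_empty_of_forall_notMem fun z hz => z.2 (by rw [(hleaf z).1 hz]; exact hw)

theorem IsCutSet.exists_adj_ne (hS : IsCutSet G S) (hu : u ∈ S) :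
    ∃ x y, x ∉ S ∧ y ∉ S ∧ x ≠ y ∧ G.Adj u x ∧ G.Adj u y := by
  have hlt : numComp G (S.erase u) < numComp G S :=
    (hS.resolve_left (ne_empty_of_mem hu)).2 u hu
  by_contra! h
  by_cases hx : ∃ x ∉ S, G.Adj u x
  · obtain ⟨x, hxS, hux⟩ := hx
    refine hlt.ne (numComp_erase_eq hu hxS hux fun y hyS huy => ?_)
    by_contra hyx
    exact h x y hxS hyS (Ne.symm hyx) hux huy
  · have := numComp_erase_eq_add_one hu fun x hux => by_contra fun hxS => hx ⟨x, hxS, hux⟩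
    omega

end VertexDeletion

section Glue

variable {V₁ V₂ : Type*} {Γ1 : SimpleGraph V₁} {Γ2 : SimpleGraph V₂} {f1 v1 : V₁} {f2 v2 : V₂}

@[simp] theorem glueGraph_adj_inl_inl {a b : {x : V₁ // x ≠ f1}} :
    (glueGraph Γ1 Γ2 f1 v1 f2 v2).Adj (.inl a) (.inl b) ↔ Γ1.Adj a b := by
  simpa [glueGraph, adj_comm Γ1 b] using fun h hab => h.ne (congrArg Subtype.val hab)

@[simp] theorem glueGraph_adj_inr_inr {a b : {y : V₂ // y ≠ f2 ∧ y ≠ v2}} :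
    (glueGraph Γ1 Γ2 f1 v1 f2 v2).Adj (.inr a) (.inr b) ↔ Γ2.Adj a b := by
  simpa [glueGraph, adj_comm Γ2 b] using fun h hab => h.ne (congrArg Subtype.val hab)

@[simp] theorem glueGraph_adj_inl_inr {a : {x : V₁ // x ≠ f1}}
    {b : {y : V₂ // y ≠ f2 ∧ y ≠ v2}} :
    (glueGraph Γ1 Γ2 f1 v1 f2 v2).Adj (.inl a) (.inr b) ↔ a.1 = v1 ∧ Γ2.Adj v2 b := by
  simp [glueGraph]

@[simp] theorem glueGraph_adj_inr_inl {a : {x : V₁ // x ≠ f1}}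
    {b : {y : V₂ // y ≠ f2 ∧ y ≠ v2}} :
    (glueGraph Γ1 Γ2 f1 v1 f2 v2).Adj (.inr b) (.inl a) ↔ a.1 = v1 ∧ Γ2.Adj v2 b := by
  simp [glueGraph]

section LeftPart

variable [DecidableEq V₁] {S : Finset (GlueV f1 f2 v2)}

theorem mem_leftPart {x : V₁} : x ∈ leftPart S ↔ ∃ h : x ≠ f1, .inl ⟨x, h⟩ ∈ S := by
  simp [leftPart]

theorem f1_notMem_leftPart : f1 ∉ leftPart S := by
  simp [mem_leftPart]

theorem v1_mem_leftPart_iff (hne1 : v1 ≠ f1) : v1 ∈ leftPart S ↔ .inl ⟨v1, hne1⟩ ∈ S := by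
  simp [mem_leftPart, hne1]

theorem leftPart_eq_map_toLeft : leftPart S = S.toLeft.map (Function.Embedding.subtype _) := by
  ext x
  simp [mem_leftPart]

theorem mem_compl_insert_leftPart {x : V₁} :
    x ∈ ((↑(insert f1 (leftPart S)) : Set V₁)ᶜ) ↔ ∃ h : x ≠ f1, .inl ⟨x, h⟩ ∉ S := by
  simp only [coe_insert, Set.mem_compl_iff, Set.mem_insert_iff, mem_coe, mem_leftPart, not_or]
  exact ⟨fun h => ⟨h.1, fun h' => h.2 ⟨h.1, h'⟩⟩, fun ⟨h1, h2⟩ => ⟨h1, fun ⟨_, h'⟩ => h2 h'⟩⟩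

end LeftPart

variable [DecidableEq V₂]

def glueRight (hne1 : v1 ≠ f1) (y : V₂) (hy : y ≠ f2) : GlueV f1 f2 v2 :=
  if h : y = v2 then .inl ⟨v1, hne1⟩ else .inr ⟨y, hy, h⟩

theorem glueRight_of_ne (hne1 : v1 ≠ f1) {y : V₂} (hy : y ≠ f2) (h : y ≠ v2) :
    glueRight hne1 y hy = .inr ⟨y, hy, h⟩ :=
  dif_neg h

theorem glueRight_self (hne1 : v1 ≠ f1) (hne2 : v2 ≠ f2) :
    (glueRight hne1 v2 hne2 : GlueV f1 f2 v2) = .inl ⟨v1, hne1⟩ :=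
  dif_pos rfl

theorem glueGraph_adj_glueRight (hne1 : v1 ≠ f1) {y y' : V₂} (hy : y ≠ f2) (hy' : y' ≠ f2) :
    (glueGraph Γ1 Γ2 f1 v1 f2 v2).Adj (glueRight hne1 y hy) (glueRight hne1 y' hy') ↔
      Γ2.Adj y y' := by
  unfold glueRight
  split_ifs <;> subst_vars <;> simp [adj_comm Γ2 y']

variable [DecidableEq V₁] {S : Finset (GlueV f1 f2 v2)}

theorem mem_rightPart (hne1 : v1 ≠ f1) (hne2 : v2 ≠ f2) {y : V₂} :
    y ∈ rightPart v1 S ↔ ∃ h : y ≠ f2, glueRight hne1 y h ∈ S := by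
  by_cases hy : y = v2
  · subst hy
    simp [rightPart, glueRight, hne2, hne1, apply_ite (y ∈ ·)]
  · simp [rightPart, glueRight, hy, apply_ite (y ∈ ·)]

theorem f2_notMem_rightPart (hne1 : v1 ≠ f1) (hne2 : v2 ≠ f2) : f2 ∉ rightPart v1 S := by
  simp [mem_rightPart hne1 hne2]

theorem v2_mem_rightPart_iff (hne1 : v1 ≠ f1) (hne2 : v2 ≠ f2) :
    v2 ∈ rightPart v1 S ↔ .inl ⟨v1, hne1⟩ ∈ S := by
  simp [mem_rightPart hne1 hne2, hne2, glueRight]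

theorem mem_compl_insert_rightPart (hne1 : v1 ≠ f1) (hne2 : v2 ≠ f2) {y : V₂} :
    y ∈ ((↑(insert f2 (rightPart v1 S)) : Set V₂)ᶜ) ↔ ∃ h : y ≠ f2, glueRight hne1 y h ∉ S := by
  simp only [coe_insert, Set.mem_compl_iff, Set.mem_insert_iff, mem_coe, mem_rightPart hne1 hne2,
    not_or]
  exact ⟨fun h => ⟨h.1, fun h' => h.2 ⟨h.1, h'⟩⟩, fun ⟨h1, h2⟩ => ⟨h1, fun ⟨_, h'⟩ => h2 h'⟩⟩

theorem mem_compl_insert_rightPart_of_inr (hne1 : v1 ≠ f1) (hne2 : v2 ≠ f2)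
    {b : {y : V₂ // y ≠ f2 ∧ y ≠ v2}} (h : .inr b ∉ S) :
    b.1 ∈ ((↑(insert f2 (rightPart v1 S)) : Set V₂)ᶜ) :=
  (mem_compl_insert_rightPart hne1 hne2).2 ⟨b.2.1, by rwa [glueRight_of_ne hne1 b.2.1 b.2.2]⟩

theorem leftPart_erase_inl (a : {x : V₁ // x ≠ f1}) :
    leftPart (S.erase (.inl a)) = (leftPart S).erase a := by
  ext x
  by_cases hx : x = a <;> simp [mem_leftPart, hx, Subtype.ext_iff]

theorem leftPart_erase_inr (b : {y : V₂ // y ≠ f2 ∧ y ≠ v2}) :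
    leftPart (S.erase (.inr b)) = leftPart S := by
  ext x
  simp [mem_leftPart]

theorem rightPart_erase_inr (hne1 : v1 ≠ f1) (hne2 : v2 ≠ f2) (b : {y : V₂ // y ≠ f2 ∧ y ≠ v2}) :
    rightPart v1 (S.erase (.inr b)) = (rightPart v1 S).erase b := by
  ext y
  by_cases hy : y = v2
  · rw [hy]
    simp [v2_mem_rightPart_iff hne1 hne2, Ne.symm b.2.2]
  · by_cases hyb : y = b <;>
      simp [mem_rightPart hne1 hne2, glueRight, hy, hyb, Subtype.ext_iff, b.2.2]

theorem rightPart_erase_inl (hne1 : v1 ≠ f1) (hne2 : v2 ≠ f2) {a : {x : V₁ // x ≠ f1}}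
    (ha : a.1 ≠ v1) : rightPart v1 (S.erase (.inl a)) = rightPart v1 S := by
  ext y
  by_cases hy : y = v2
  · rw [hy]
    simp [v2_mem_rightPart_iff hne1 hne2, Subtype.ext_iff, Ne.symm ha]
  · simp [mem_rightPart hne1 hne2, glueRight, hy]

theorem card_rightPart (hne1 : v1 ≠ f1) (hne2 : v2 ≠ f2) :
    #(rightPart v1 S) = #S.toRight + if .inl ⟨v1, hne1⟩ ∈ S then 1 else 0 := by
  have hR : rightPart v1 S = (S.toRight.map (Function.Embedding.subtype _)) ∪
      if .inl ⟨v1, hne1⟩ ∈ S then {v2} else ∅ := by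
    ext y
    by_cases hy : y = v2
    · rw [hy]
      simp [v2_mem_rightPart_iff hne1 hne2, apply_ite (v2 ∈ ·)]
    · simp [mem_rightPart hne1 hne2, glueRight, hy, apply_ite (y ∈ ·)]
  rw [hR, card_union_of_disjoint, card_map]
  · split_ifs <;> simp
  · split_ifs <;> simp

theorem card_leftPart_add_card_rightPart (hne1 : v1 ≠ f1) (hne2 : v2 ≠ f2) :
    #(leftPart S) + #(rightPart v1 S) = #S + if .inl ⟨v1, hne1⟩ ∈ S then 1 else 0 := by
  rw [card_rightPart hne1 hne2, leftPart_eq_map_toLeft, card_map, ← add_assoc,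
    card_toLeft_add_card_toRight]

variable (Γ1 Γ2 v1) in
def glueLeftHom (S : Finset (GlueV f1 f2 v2)) :
    Γ1.induce ((↑(insert f1 (leftPart S)) : Set V₁)ᶜ) →g
      (glueGraph Γ1 Γ2 f1 v1 f2 v2).induce ((↑S : Set (GlueV f1 f2 v2))ᶜ) where
  toFun x := ⟨.inl ⟨x, (mem_compl_insert_leftPart.1 x.2).1⟩,
    (mem_compl_insert_leftPart.1 x.2).2⟩
  map_rel' h := by simpa using h

variable (Γ1 Γ2) in
def glueRightHom (hne1 : v1 ≠ f1) (hne2 : v2 ≠ f2) (S : Finset (GlueV f1 f2 v2)) :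
    Γ2.induce ((↑(insert f2 (rightPart v1 S)) : Set V₂)ᶜ) →g
      (glueGraph Γ1 Γ2 f1 v1 f2 v2).induce ((↑S : Set (GlueV f1 f2 v2))ᶜ) where
  toFun y := ⟨glueRight hne1 y ((mem_compl_insert_rightPart hne1 hne2).1 y.2).1,
    ((mem_compl_insert_rightPart hne1 hne2).1 y.2).2⟩
  map_rel' h := by simpa [glueGraph_adj_glueRight] using h

theorem glueRightHom_mk (hne1 : v1 ≠ f1) (hne2 : v2 ≠ f2) (b : {y : V₂ // y ≠ f2 ∧ y ≠ v2})
    (hb : b.1 ∈ ((↑(insert f2 (rightPart v1 S)) : Set V₂)ᶜ))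
    (h : (.inr b : GlueV f1 f2 v2) ∈ (↑S : Set (GlueV f1 f2 v2))ᶜ) :
    glueRightHom Γ1 Γ2 hne1 hne2 S ⟨b, hb⟩ = ⟨.inr b, h⟩ :=
  Subtype.ext (glueRight_of_ne hne1 b.2.1 b.2.2)

theorem glueLeftHom_eq_glueRightHom (hne1 : v1 ≠ f1) (hne2 : v2 ≠ f2)
    (hv1 : v1 ∈ ((↑(insert f1 (leftPart S)) : Set V₁)ᶜ))
    (hv2 : v2 ∈ ((↑(insert f2 (rightPart v1 S)) : Set V₂)ᶜ)) :
    glueLeftHom Γ1 Γ2 v1 S ⟨v1, hv1⟩ = glueRightHom Γ1 Γ2 hne1 hne2 S ⟨v2, hv2⟩ :=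
  Subtype.ext (glueRight_self hne1 hne2).symm

variable (Γ1 Γ2) in
theorem exists_glueLeftHom_or_glueRightHom (hne1 : v1 ≠ f1) (hne2 : v2 ≠ f2)
    (z : ((↑S : Set (GlueV f1 f2 v2))ᶜ : Set _)) :
    (∃ x, glueLeftHom Γ1 Γ2 v1 S x = z) ∨ ∃ y, glueRightHom Γ1 Γ2 hne1 hne2 S y = z := by
  rcases z with ⟨a | b, h⟩
  · exact .inl ⟨⟨a, mem_compl_insert_leftPart.2 ⟨a.2, h⟩⟩, rfl⟩
  · exact .inr ⟨⟨b, mem_compl_insert_rightPart_of_inr hne1 hne2 h⟩, glueRightHom_mk hne1 hne2 b _ h⟩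

variable [Fintype V₁] [Fintype V₂]

theorem numComp_glueGraph_of_mem (hne1 : v1 ≠ f1) (hne2 : v2 ≠ f2)
    (hv : .inl ⟨v1, hne1⟩ ∈ S) :
    numComp (glueGraph Γ1 Γ2 f1 v1 f2 v2) S =
      numComp Γ1 (insert f1 (leftPart S)) + numComp Γ2 (insert f2 (rightPart v1 S)) := by
  let g : ((↑S : Set (GlueV f1 f2 v2))ᶜ : Set _) →
      (Γ1.induce ((↑(insert f1 (leftPart S)) : Set V₁)ᶜ)).ConnectedComponent ⊕
        (Γ2.induce ((↑(insert f2 (rightPart v1 S)) : Set V₂)ᶜ)).ConnectedComponent := fun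
    | ⟨.inl a, h⟩ => .inl (connectedComponentMk _ ⟨a, mem_compl_insert_leftPart.2 ⟨a.2, h⟩⟩)
    | ⟨.inr b, h⟩ =>
      .inr (connectedComponentMk _ ⟨b, mem_compl_insert_rightPart_of_inr hne1 hne2 h⟩)
  rw [numComp, card_connectedComponent_eq_of_fibers g, Nat.card_sum, numComp, numComp]
  · rintro ⟨a | a, ha⟩ ⟨b | b, hb⟩ (hab : (glueGraph Γ1 Γ2 f1 v1 f2 v2).Adj _ _)
    · exact congrArg Sum.inl (connectedComponentMk_eq_of_adj (by simpa using hab))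
    · exact absurd (by simpa [← (glueGraph_adj_inl_inr.1 hab).1] using hv) ha
    · exact absurd (by simpa [← (glueGraph_adj_inr_inl.1 hab).1] using hv) hb
    · exact congrArg Sum.inr (connectedComponentMk_eq_of_adj (by simpa using hab))
  · rintro ⟨a | a, ha⟩ ⟨b | b, hb⟩ h <;> simp only [g, Sum.inl.injEq, Sum.inr.injEq,
      reduceCtorEq, ConnectedComponent.eq] at h
    · exact h.map (glueLeftHom Γ1 Γ2 v1 S)
    · have := h.map (glueRightHom Γ1 Γ2 hne1 hne2 S)
      rwa [glueRightHom_mk hne1 hne2 a _ ha, glueRightHom_mk hne1 hne2 b _ hb] at this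
  · rintro (c | c) <;> induction c using ConnectedComponent.ind with | h x => ?_
    · exact ⟨glueLeftHom Γ1 Γ2 v1 S x, rfl⟩
    · have hx2 : x.1 ≠ v2 := fun h => ((mem_compl_insert_rightPart hne1 hne2).1 x.2).2
        (by simpa [h, glueRight_self hne1 hne2] using hv)
      exact ⟨glueRightHom Γ1 Γ2 hne1 hne2 S x,
        by simp [g, glueRightHom, glueRight_of_ne hne1 _ hx2]⟩

theorem numComp_glueGraph_of_notMem (hne1 : v1 ≠ f1) (hne2 : v2 ≠ f2)
    (hv : .inl ⟨v1, hne1⟩ ∉ S) :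
    numComp (glueGraph Γ1 Γ2 f1 v1 f2 v2) S + 1 =
      numComp Γ1 (insert f1 (leftPart S)) + numComp Γ2 (insert f2 (rightPart v1 S)) := by
  classical
  set Ω₁ : Set V₁ := (↑(insert f1 (leftPart S)))ᶜ
  set Ω₂ : Set V₂ := (↑(insert f2 (rightPart v1 S)))ᶜ
  set ιL := glueLeftHom Γ1 Γ2 v1 S
  set ιR := glueRightHom Γ1 Γ2 hne1 hne2 S
  have hv1 : v1 ∈ Ω₁ := mem_compl_insert_leftPart.2 ⟨hne1, hv⟩
  have hv2 : v2 ∈ Ω₂ := (mem_compl_insert_rightPart hne1 hne2).2 ⟨hne2, by rwa [glueRight_self]⟩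
  set K1 := (Γ1.induce Ω₁).connectedComponentMk ⟨v1, hv1⟩
  set K2 := (Γ2.induce Ω₂).connectedComponentMk ⟨v2, hv2⟩
  have hK2 : ∀ y (hy : y ∈ Ω₂), Γ2.Adj v2 y → connectedComponentMk _ ⟨y, hy⟩ = K2 :=
    fun y hy h => connectedComponentMk_eq_of_adj (G := Γ2.induce Ω₂) (v := ⟨y, hy⟩)
      (w := ⟨v2, hv2⟩) h.symm
  let φ1 : (Γ1.induce Ω₁).ConnectedComponent →
      {c : (Γ1.induce Ω₁).ConnectedComponent ⊕ (Γ2.induce Ω₂).ConnectedComponent // c ≠ .inr K2} :=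
    fun c => ⟨.inl c, Sum.inl_ne_inr⟩
  let g : ((↑S : Set (GlueV f1 f2 v2))ᶜ : Set _) → _ := fun
    | ⟨.inl a, h⟩ => φ1 (connectedComponentMk _ ⟨a, mem_compl_insert_leftPart.2 ⟨a.2, h⟩⟩)
    | ⟨.inr b, h⟩ =>
      mergeRight K1 K2 (connectedComponentMk _ ⟨b, mem_compl_insert_rightPart_of_inr hne1 hne2 h⟩)
  have hgL : ∀ x, g (ιL x) = φ1 (connectedComponentMk _ x) := fun _ => rfl
  have hgR : ∀ y, g (ιR y) = mergeRight K1 K2 (connectedComponentMk _ y) := by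
    rintro ⟨y, hy⟩
    by_cases hyv : y = v2
    · subst hyv
      rw [← glueLeftHom_eq_glueRightHom hne1 hne2 hv1 hy, hgL, mergeRight_self]
    · obtain ⟨hyf, h⟩ := (mem_compl_insert_rightPart hne1 hne2).1 hy
      rw [glueRight_of_ne hne1 hyf hyv] at h
      rw [glueRightHom_mk hne1 hne2 ⟨y, hyf, hyv⟩ hy h]
  rw [numComp, card_connectedComponent_eq_of_fibers g, numComp, numComp, ← Nat.card_sum,
    ← Finite.card_option]
  · exact Nat.card_congr (Equiv.optionSubtypeNe _)
  · rintro ⟨a | a, ha⟩ ⟨b | b, hb⟩ (hab : (glueGraph Γ1 Γ2 f1 v1 f2 v2).Adj _ _)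
    · exact congrArg φ1 (connectedComponentMk_eq_of_adj (by simpa using hab))
    · obtain ⟨hav, hvb⟩ := glueGraph_adj_inl_inr.1 hab
      obtain ⟨a, hfa⟩ := a
      dsimp only at hav
      subst hav
      exact (inl_eq_mergeRight_iff K1 K2).2 ⟨rfl, hK2 _ _ hvb⟩
    · obtain ⟨hbv, hva⟩ := glueGraph_adj_inr_inl.1 hab
      obtain ⟨b, hfb⟩ := b
      dsimp only at hbv
      subst hbv
      exact ((inl_eq_mergeRight_iff K1 K2).2 ⟨rfl, hK2 _ _ hva⟩).symm
    · exact congrArg (mergeRight K1 K2)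
        (connectedComponentMk_eq_of_adj (by simpa using hab))
  · have hLR : ∀ x y, connectedComponentMk _ x = K1 → connectedComponentMk _ y = K2 →
        Reachable _ (ιL x) (ιR y) := fun x y hx hy =>
      ((ConnectedComponent.eq.1 hx).map ιL).trans <| glueLeftHom_eq_glueRightHom hne1 hne2 hv1 hv2 ▸
        (ConnectedComponent.eq.1 hy).symm.map ιR
    have hcover : ∀ z, (∃ x, ιL x = z) ∨ ∃ y, ιR y = z :=
      exists_glueLeftHom_or_glueRightHom Γ1 Γ2 hne1 hne2
    intro z z' h
    rcases hcover z with ⟨x, rfl⟩ | ⟨y, rfl⟩ <;> rcases hcover z' with ⟨x', rfl⟩ | ⟨y', rfl⟩ <;>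
      simp only [hgL, hgR] at h
    · exact (ConnectedComponent.eq.1 (Sum.inl_injective (congrArg Subtype.val h))).map ιL
    · exact hLR x y' ((inl_eq_mergeRight_iff K1 K2).1 h).1 ((inl_eq_mergeRight_iff K1 K2).1 h).2
    · obtain ⟨hx', hy⟩ := (inl_eq_mergeRight_iff K1 K2).1 h.symm
      exact (hLR x' y hx' hy).symm
    · exact (ConnectedComponent.eq.1 (mergeRight_injective K1 K2 h)).map ιR
  · rintro ⟨c | c, hc⟩ <;> induction c using ConnectedComponent.ind with | h x => ?_
    · exact ⟨ιL x, rfl⟩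
    · exact ⟨ιR x, (hgR x).trans (dif_neg (by simpa using hc))⟩

theorem numComp_glueGraph_add (hne1 : v1 ≠ f1) (hne2 : v2 ≠ f2)
    (hleaf1 : ∀ x, Γ1.Adj f1 x ↔ x = v1) (hleaf2 : ∀ y, Γ2.Adj f2 y ↔ y = v2)
    (S : Finset (GlueV f1 f2 v2)) :
    numComp (glueGraph Γ1 Γ2 f1 v1 f2 v2) S + 1 + (if .inl ⟨v1, hne1⟩ ∈ S then 1 else 0) =
      numComp Γ1 (leftPart S) + numComp Γ2 (rightPart v1 S) := by
  split_ifs with hv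
  · rw [numComp_glueGraph_of_mem hne1 hne2 hv,
      numComp_insert_leaf_of_mem f1_notMem_leftPart ((v1_mem_leftPart_iff hne1).2 hv) hleaf1,
      numComp_insert_leaf_of_mem (f2_notMem_rightPart hne1 hne2)
        ((v2_mem_rightPart_iff hne1 hne2).2 hv) hleaf2]
    ring
  · rw [add_zero, numComp_glueGraph_of_notMem hne1 hne2 hv,
      numComp_insert_leaf_of_notMem f1_notMem_leftPart (mt (v1_mem_leftPart_iff hne1).1 hv)
        hleaf1,
      numComp_insert_leaf_of_notMem (f2_notMem_rightPart hne1 hne2)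
        (mt (v2_mem_rightPart_iff hne1 hne2).1 hv) hleaf2]

theorem inl_notMem_of_degree_eq_two [DecidableRel Γ1.Adj] (hne1 : v1 ≠ f1)
    (hS : IsCutSet (glueGraph Γ1 Γ2 f1 v1 f2 v2) S)
    (hv : .inl ⟨v1, hne1⟩ ∈ S) {u : V₁} (hvu : Γ1.Adj v1 u) (hu : Γ1.degree u = 2)
    (huf : u ≠ f1) : .inl ⟨u, huf⟩ ∉ S := by
  intro huS
  obtain ⟨x, y, hx, hy, hxy, hux, huy⟩ := hS.exists_adj_ne huS
  have hnbr : ∀ z ∉ S, (glueGraph Γ1 Γ2 f1 v1 f2 v2).Adj (.inl ⟨u, huf⟩) z →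
      ∃ a : {x : V₁ // x ≠ f1}, z = .inl a ∧ Γ1.Adj u a ∧ a.1 ≠ v1 := by
    rintro (a | b) hz hadj
    · refine ⟨a, rfl, by simpa using hadj, fun h => hz ?_⟩
      rwa [show a = ⟨v1, hne1⟩ from Subtype.ext h]
    · exact absurd (glueGraph_adj_inl_inr.1 hadj).1 hvu.ne.symm
  obtain ⟨a, rfl, hua, hav⟩ := hnbr x hx hux
  obtain ⟨b, rfl, hub, hbv⟩ := hnbr y hy huy
  exact hxy (congrArg _ (Subtype.ext (eq_of_adj_of_degree_eq_two hu hvu.symm hua hub hav hbv)))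

theorem inr_notMem_of_degree_eq_two [DecidableRel Γ2.Adj] (hne1 : v1 ≠ f1)
    (hS : IsCutSet (glueGraph Γ1 Γ2 f1 v1 f2 v2) S)
    (hv : .inl ⟨v1, hne1⟩ ∈ S) {u : V₂} (hvu : Γ2.Adj v2 u) (hu : Γ2.degree u = 2)
    (huf : u ≠ f2) : .inr ⟨u, huf, hvu.ne.symm⟩ ∉ S := by
  intro huS
  obtain ⟨x, y, hx, hy, hxy, hux, huy⟩ := hS.exists_adj_ne huS
  have hnbr : ∀ z ∉ S, (glueGraph Γ1 Γ2 f1 v1 f2 v2).Adj (.inr ⟨u, huf, hvu.ne.symm⟩) z →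
      ∃ b : {y : V₂ // y ≠ f2 ∧ y ≠ v2}, z = .inr b ∧ Γ2.Adj u b := by
    rintro (a | b) hz hadj
    · refine absurd ?_ hz
      rwa [show a = ⟨v1, hne1⟩ from Subtype.ext (glueGraph_adj_inr_inl.1 hadj).1]
    · exact ⟨b, rfl, by simpa using hadj⟩
  obtain ⟨a, rfl, hua⟩ := hnbr x hx hux
  obtain ⟨b, rfl, hub⟩ := hnbr y hy huy
  exact hxy (congrArg _ (Subtype.ext
    (eq_of_adj_of_degree_eq_two hu hvu.symm hua hub a.2.2 b.2.2)))

theorem isCutSet_leftPart [DecidableRel Γ1.Adj] (hne1 : v1 ≠ f1) (hne2 : v2 ≠ f2)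
    (hleaf1 : ∀ x, Γ1.Adj f1 x ↔ x = v1) (hleaf2 : ∀ y, Γ2.Adj f2 y ↔ y = v2)
    (hS : IsCutSet (glueGraph Γ1 Γ2 f1 v1 f2 v2) S)
    {u : V₁} (hvu : Γ1.Adj v1 u) (hu : Γ1.degree u = 2) (huf : u ≠ f1) :
    IsCutSet Γ1 (leftPart S) := by
  rcases eq_or_ne (leftPart S) ∅ with hL | hL
  · exact .inl hL
  refine .inr ⟨hL, fun i hi => ?_⟩
  obtain ⟨hif, hiS⟩ := mem_leftPart.1 hi
  by_cases hiv : i = v1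
  · subst hiv
    have huL : u ∉ leftPart S := fun h =>
      inl_notMem_of_degree_eq_two hif hS hiS hvu hu huf (mem_leftPart.1 h).2
    exact numComp_erase_lt_of_leaf hi f1_notMem_leftPart huL hleaf1 hvu huf.symm
  · have hlt := (hS.resolve_left (ne_empty_of_mem hiS)).2 _ hiS
    have h1 := numComp_glueGraph_add hne1 hne2 hleaf1 hleaf2 S
    have h2 := numComp_glueGraph_add hne1 hne2 hleaf1 hleaf2 (S.erase (.inl ⟨i, hif⟩))
    rw [leftPart_erase_inl, rightPart_erase_inl hne1 hne2 hiv] at h2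
    simp only [mem_erase, ne_eq, Sum.inl.injEq, Subtype.mk.injEq, Ne.symm hiv, not_false_eq_true,
      true_and] at h2
    split_ifs at h1 h2 <;> omega

theorem isCutSet_rightPart [DecidableRel Γ2.Adj] (hne1 : v1 ≠ f1) (hne2 : v2 ≠ f2)
    (hleaf1 : ∀ x, Γ1.Adj f1 x ↔ x = v1) (hleaf2 : ∀ y, Γ2.Adj f2 y ↔ y = v2)
    (hS : IsCutSet (glueGraph Γ1 Γ2 f1 v1 f2 v2) S)
    {u : V₂} (hvu : Γ2.Adj v2 u) (hu : Γ2.degree u = 2) (huf : u ≠ f2) :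
    IsCutSet Γ2 (rightPart v1 S) := by
  rcases eq_or_ne (rightPart v1 S) ∅ with hR | hR
  · exact .inl hR
  refine .inr ⟨hR, fun j hj => ?_⟩
  by_cases hjv : j = v2
  · subst hjv
    have hv := (v2_mem_rightPart_iff hne1 hne2).1 hj
    have huR : u ∉ rightPart v1 S := fun h => inr_notMem_of_degree_eq_two hne1 hS hv hvu hu huf
      (by simpa [glueRight_of_ne hne1 huf hvu.ne.symm] using ((mem_rightPart hne1 hne2).1 h).2)
    exact numComp_erase_lt_of_leaf hj (f2_notMem_rightPart hne1 hne2) huR hleaf2 hvu huf.symm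
  · obtain ⟨hjf, hjS⟩ := (mem_rightPart hne1 hne2).1 hj
    rw [glueRight_of_ne hne1 hjf hjv] at hjS
    have hlt := (hS.resolve_left (ne_empty_of_mem hjS)).2 _ hjS
    have h1 := numComp_glueGraph_add hne1 hne2 hleaf1 hleaf2 S
    have h2 := numComp_glueGraph_add hne1 hne2 hleaf1 hleaf2 (S.erase (.inr ⟨j, hjf, hjv⟩))
    rw [leftPart_erase_inr, rightPart_erase_inr hne1 hne2] at h2
    simp only [mem_erase, ne_eq, reduceCtorEq, not_false_eq_true, true_and] at h2
    split_ifs at h1 h2 <;> omega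

end Glue

theorem stmt12_general {V₁ V₂ : Type*} [Fintype V₁] [DecidableEq V₁] [Fintype V₂] [DecidableEq V₂]
    (Γ1 : SimpleGraph V₁) (Γ2 : SimpleGraph V₂)
    [DecidableRel Γ1.Adj] [DecidableRel Γ2.Adj]
    (f1 v1 : V₁) (f2 v2 : V₂)
    (hl1 : Γ1.degree f1 = 1) (hl2 : Γ2.degree f2 = 1)
    (ha1 : Γ1.Adj f1 v1) (ha2 : Γ2.Adj f2 v2)
    (hne1 : v1 ≠ f1) (hne2 : v2 ≠ f2)
    (hunmixed1 : Unmixed Γ1) (hunmixed2 : Unmixed Γ2)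
    (hu1 : ∃ u1, Γ1.Adj v1 u1 ∧ Γ1.degree u1 = 2)
    (hu2 : ∃ u2, Γ2.Adj v2 u2 ∧ Γ2.degree u2 = 2) :
    Unmixed (glueGraph Γ1 Γ2 f1 v1 f2 v2) := by
  intro S hS
  obtain ⟨u1, hvu1, hdeg1⟩ := hu1
  obtain ⟨u2, hvu2, hdeg2⟩ := hu2
  have huf1 : u1 ≠ f1 := by rintro rfl; omega
  have huf2 : u2 ≠ f2 := by rintro rfl; omega
  have hleaf1 := adj_iff_eq_of_degree_eq_one hl1 ha1
  have hleaf2 := adj_iff_eq_of_degree_eq_one hl2 ha2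
  have hc1 := hunmixed1 _ (isCutSet_leftPart hne1 hne2 hleaf1 hleaf2 hS hvu1 hdeg1 huf1)
  have hc2 := hunmixed2 _ (isCutSet_rightPart hne1 hne2 hleaf1 hleaf2 hS hvu2 hdeg2 huf2)
  have hcount := numComp_glueGraph_add hne1 hne2 hleaf1 hleaf2 S
  have hcard := card_leftPart_add_card_rightPart (S := S) hne1 hne2
  split_ifs at hcount hcard <;> omega

theorem stmt12 {V₁ V₂ : Type*} [Fintype V₁] [DecidableEq V₁] [Fintype V₂] [DecidableEq V₂]
    (Γ1 : SimpleGraph V₁) (Γ2 : SimpleGraph V₂)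
    [DecidableRel Γ1.Adj] [DecidableRel Γ2.Adj]
    (hconn1 : Γ1.Connected) (hconn2 : Γ2.Connected)
    (f1 v1 : V₁) (f2 v2 : V₂)
    (hl1 : Γ1.degree f1 = 1) (hl2 : Γ2.degree f2 = 1)
    (ha1 : Γ1.Adj f1 v1) (ha2 : Γ2.Adj f2 v2)
    (hd1 : 3 ≤ Γ1.degree v1) (hd2 : 3 ≤ Γ2.degree v2)
    (hne1 : v1 ≠ f1) (hne2 : v2 ≠ f2)
    (hunmixed1 : Unmixed Γ1) (hunmixed2 : Unmixed Γ2)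
    (hu1 : ∃ u1, Γ1.Adj v1 u1 ∧ Γ1.degree u1 = 2)
    (hu2 : ∃ u2, Γ2.Adj v2 u2 ∧ Γ2.degree u2 = 2) :
    Unmixed (glueGraph Γ1 Γ2 f1 v1 f2 v2) :=
  stmt12_general Γ1 Γ2 f1 v1 f2 v2 hl1 hl2 ha1 ha2 hne1 hne2 hunmixed1 hunmixed2 hu1 hu2
end

section
/- Let G be a graph whose binomial edge ideal is unmixed (i.e., c_G(S) = |S| + 1 for all cut sets S), and let S, T be cut sets with |T| ≥ |S| and |T \ S| > 1. Then the minimal primes P_S and P_T do not form an edge of the dual graph, i.e., ht(P_S + P_T) ≥ ht(P_S) + 2. -/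
open SimpleGraph Finset

open MvPolynomial in
/-- The prime ideal `P_S(G)` in `R = K[x_1, ..., x_n, y_1, ..., y_n]`: it is generated by the
variables `x_i, y_i` for `i ∈ S` together with the `2`-minors `x_i y_j - x_j y_i` for all
pairs `i, j` lying in a common connected component of `G` restricted to the complement of `S`
(these generate the binomial edge ideals of the complete graphs on the components). -/
noncomputable def PSIdeal {n : ℕ} (K : Type*) [Field K] (G : SimpleGraph (Fin n))
    (S : Finset (Fin n)) : Ideal (MvPolynomial (Fin n ⊕ Fin n) K) :=
  Ideal.span
    ((fun i => (X (Sum.inl i) : MvPolynomial (Fin n ⊕ Fin n) K)) '' (↑S : Set (Fin n)) ∪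
     (fun i => (X (Sum.inr i) : MvPolynomial (Fin n ⊕ Fin n) K)) '' (↑S : Set (Fin n)) ∪
     {p | ∃ i j : Fin n,
        (∃ (hi : i ∈ ((↑S : Set (Fin n))ᶜ)) (hj : j ∈ ((↑S : Set (Fin n))ᶜ)),
          (G.induce ((↑S : Set (Fin n))ᶜ)).Reachable ⟨i, hi⟩ ⟨j, hj⟩) ∧
        p = X (Sum.inl i) * X (Sum.inr j) - X (Sum.inl j) * X (Sum.inr i)})

/-- The height of an ideal: the infimum of the heights (in the prime spectrum) of the
prime ideals containing it. -/
noncomputable def heightIdeal {R : Type*} [CommRing R] (I : Ideal R) : ℕ∞ :=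
  ⨅ (p : PrimeSpectrum R) (_ : I ≤ p.asIdeal), Order.height p

/-! Let `q` be a prime containing `P_S`, `x_i` and `y_i` for some `i ∉ S`. Modulo `q` the points
`(x_l, y_l)`, `l` in the component of `i`, are pairwise proportional since the minors vanish,
so they lie on a line spanned by some `(a, b) ≠ 0`. Reducing modulo `q` but sending
`(x_i, y_i)` to `(t a, t b)` in `(R/q)[t]` kills `P_S`; its kernel is a prime contained in `q`
(set `t = 0`) which misses `x_i` or `y_i` but contains every other variable lying in `q`.
For distinct `i, j ∈ T \ S` and a prime `q ⊇ P_S + P_T`, deforming first at `j` and then at `i`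
gives a chain `p₀ < p₁ < q` of primes above `P_S`. -/

open MvPolynomial

section MinorsIdeal

variable {σ K : Type*} [CommRing K]

noncomputable def minor (i j : σ) : MvPolynomial (σ ⊕ σ) K :=
  X (.inl i) * X (.inr j) - X (.inl j) * X (.inr i)

noncomputable def minorsIdeal (S : Set σ) (r : σ → σ → Prop) :
    Ideal (MvPolynomial (σ ⊕ σ) K) :=
  Ideal.span ((fun i => X (.inl i)) '' S ∪ (fun i => X (.inr i)) '' S ∪
    {p | ∃ i j, r i j ∧ p = minor i j})

variable {S : Set σ} {r : σ → σ → Prop}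

lemma minorsIdeal_le_iff {I : Ideal (MvPolynomial (σ ⊕ σ) K)} :
    minorsIdeal S r ≤ I ↔ (∀ s ∈ S, X (.inl s) ∈ I) ∧ (∀ s ∈ S, X (.inr s) ∈ I) ∧
      ∀ i j, r i j → minor i j ∈ I := by
  simp only [minorsIdeal, Ideal.span_le, Set.union_subset_iff, Set.image_subset_iff]
  constructor
  · rintro ⟨⟨hx, hy⟩, hm⟩
    exact ⟨hx, hy, fun i j h => hm ⟨i, j, h, rfl⟩⟩
  · rintro ⟨hx, hy, hm⟩
    exact ⟨⟨hx, hy⟩, by rintro _ ⟨i, j, h, rfl⟩; exact hm i j h⟩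

lemma exists_ne_zero_forall_mul_eq {D : Type*} [CommRing D] [Nontrivial D] {N : σ → Prop}
    (x y : σ → D) (hN : ∀ k l, N k → N l → x k * y l = x l * y k) :
    ∃ a b : D, (a ≠ 0 ∨ b ≠ 0) ∧ ∀ l, N l → a * y l = x l * b := by
  by_cases h : ∃ k, N k ∧ (x k ≠ 0 ∨ y k ≠ 0)
  · obtain ⟨k, hk, hne⟩ := h
    exact ⟨x k, y k, hne, fun l hl => hN k l hk hl⟩
  · push Not at h
    exact ⟨1, 0, .inl one_ne_zero, fun l hl => by simp [(h l hl).2]⟩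

section Deform

variable [DecidableEq σ] (q : Ideal (MvPolynomial (σ ⊕ σ) K)) (i : σ)
  (a b : MvPolynomial (σ ⊕ σ) K ⧸ q)

noncomputable def deform :
    MvPolynomial (σ ⊕ σ) K →+* Polynomial (MvPolynomial (σ ⊕ σ) K ⧸ q) :=
  eval₂Hom (Polynomial.C.comp ((Ideal.Quotient.mk q).comp C)) fun v : σ ⊕ σ =>
    if v = .inl i then Polynomial.X * Polynomial.C a
    else if v = .inr i then Polynomial.X * Polynomial.C b
    else Polynomial.C (Ideal.Quotient.mk q (X v))

@[simp]
lemma deform_X_inl_self : deform q i a b (X (.inl i)) = .X * .C a := by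
  simp [deform]

@[simp]
lemma deform_X_inr_self : deform q i a b (X (.inr i)) = .X * .C b := by
  simp [deform]

lemma deform_X_of_ne {v : σ ⊕ σ} (h₁ : v ≠ .inl i) (h₂ : v ≠ .inr i) :
    deform q i a b (X v) = .C (Ideal.Quotient.mk q (X v)) := by
  simp [deform, h₁, h₂]

lemma ker_deform_le (hxi : X (.inl i) ∈ q) (hyi : X (.inr i) ∈ q) :
    RingHom.ker (deform q i a b) ≤ q := by
  have hcomp : (Polynomial.evalRingHom 0).comp (deform q i a b) = Ideal.Quotient.mk q := by
    refine MvPolynomial.ringHom_ext (fun k => by simp [deform]) fun v => ?_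
    by_cases h₁ : v = .inl i
    · simp [h₁, Ideal.Quotient.eq_zero_iff_mem.mpr hxi]
    by_cases h₂ : v = .inr i
    · simp [h₂, Ideal.Quotient.eq_zero_iff_mem.mpr hyi]
    simp [deform_X_of_ne q i a b h₁ h₂]
  intro f hf
  rw [← Ideal.Quotient.eq_zero_iff_mem, ← hcomp, RingHom.comp_apply, RingHom.mem_ker.mp hf,
    map_zero]

lemma minorsIdeal_le_ker_deform [Std.Symm r] (hq : minorsIdeal S r ≤ q) (hi : i ∉ S)
    (hline : ∀ l, r i l → a * Ideal.Quotient.mk q (X (.inr l)) =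
      Ideal.Quotient.mk q (X (.inl l)) * b) :
    minorsIdeal S r ≤ RingHom.ker (deform q i a b) := by
  obtain ⟨hxS, hyS, hm⟩ := minorsIdeal_le_iff.mp hq
  refine minorsIdeal_le_iff.mpr ⟨fun s hs => ?_, fun s hs => ?_, fun k l hkl => ?_⟩
  · have hsi : s ≠ i := fun h => hi (h ▸ hs)
    simp [deform_X_of_ne, hsi, Ideal.Quotient.eq_zero_iff_mem.mpr (hxS s hs)]
  · have hsi : s ≠ i := fun h => hi (h ▸ hs)
    simp [deform_X_of_ne, hsi, Ideal.Quotient.eq_zero_iff_mem.mpr (hyS s hs)]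
  rw [RingHom.mem_ker, minor, map_sub, map_mul, map_mul]
  rcases eq_or_ne i k with rfl | hk <;> rcases eq_or_ne i l with rfl | hl
  · ring
  · have h := congrArg (Polynomial.X * Polynomial.C ·) (hline l hkl)
    simp only [map_mul] at h
    simp only [deform_X_inl_self, deform_X_inr_self, deform_X_of_ne q i a b, ne_eq,
      Sum.inl.injEq, Sum.inr.injEq, reduceCtorEq, hl.symm, not_false_eq_true]
    linear_combination h
  · have h := congrArg (Polynomial.X * Polynomial.C ·) (hline k (symm_of r hkl))
    simp only [map_mul] at h
    simp only [deform_X_inl_self, deform_X_inr_self, deform_X_of_ne q i a b, ne_eq,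
      Sum.inl.injEq, Sum.inr.injEq, reduceCtorEq, hk.symm, not_false_eq_true]
    linear_combination -h
  · have h := congrArg Polynomial.C (Ideal.Quotient.eq_zero_iff_mem.mpr (hm k l hkl))
    simp only [minor, map_sub, map_mul, map_zero] at h
    simpa [deform_X_of_ne, hk.symm, hl.symm] using h

end Deform

lemma exists_isPrime_lt_of_X_mem [Std.Symm r] [IsTrans σ r]
    {q : Ideal (MvPolynomial (σ ⊕ σ) K)} [q.IsPrime] (hq : minorsIdeal S r ≤ q) {i : σ}
    (hi : i ∉ S) (hxi : X (.inl i) ∈ q) (hyi : X (.inr i) ∈ q) :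
    ∃ p : Ideal (MvPolynomial (σ ⊕ σ) K), p.IsPrime ∧ minorsIdeal S r ≤ p ∧ p < q ∧
      ∀ v, v ≠ .inl i → v ≠ .inr i → X v ∈ q → X v ∈ p := by
  classical
  obtain ⟨hxS, hyS, hm⟩ := minorsIdeal_le_iff.mp hq
  obtain ⟨a, b, hab, hline⟩ := exists_ne_zero_forall_mul_eq (N := r i)
    (fun l => Ideal.Quotient.mk q (X (.inl l))) (fun l => Ideal.Quotient.mk q (X (.inr l)))
    fun k l hk hl => by
      have h := Ideal.Quotient.eq_zero_iff_mem.mpr (hm k l (trans_of r (symm_of r hk) hl))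
      rwa [minor, map_sub, map_mul, map_mul, sub_eq_zero] at h
  refine ⟨RingHom.ker (deform q i a b), RingHom.ker_isPrime _,
    minorsIdeal_le_ker_deform q i a b hq hi hline,
    lt_of_le_of_ne (ker_deform_le q i a b hxi hyi) fun h => ?_, fun v h₁ h₂ hv => ?_⟩
  · rw [← h, RingHom.mem_ker] at hxi hyi
    simp only [deform_X_inl_self, deform_X_inr_self, mul_eq_zero, Polynomial.X_ne_zero,
      Polynomial.C_eq_zero, false_or] at hxi hyi
    exact hab.elim (· hxi) (· hyi)
  · rw [RingHom.mem_ker, deform_X_of_ne q i a b h₁ h₂, Ideal.Quotient.eq_zero_iff_mem.mpr hv,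
      map_zero]

end MinorsIdeal

namespace SimpleGraph

variable {V : Type*} (G : SimpleGraph V) (S : Set V)

def ReachableOff (i j : V) : Prop :=
  ∃ (hi : i ∈ Sᶜ) (hj : j ∈ Sᶜ), (G.induce Sᶜ).Reachable ⟨i, hi⟩ ⟨j, hj⟩

instance : Std.Symm (G.ReachableOff S) where
  symm _ _ := fun ⟨hi, hj, h⟩ => ⟨hj, hi, h.symm⟩

instance : IsTrans V (G.ReachableOff S) where
  trans _ _ _ := fun ⟨hi, _, h⟩ ⟨_, hk, h'⟩ => ⟨hi, hk, h.trans h'⟩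

end SimpleGraph

lemma PSIdeal_eq_minorsIdeal {n : ℕ} (K : Type*) [Field K] (G : SimpleGraph (Fin n))
    (S : Finset (Fin n)) : PSIdeal K G S = minorsIdeal ↑S (G.ReachableOff ↑S) :=
  rfl

lemma heightIdeal_add_two_le {R : Type*} [CommRing R] {I : Ideal R}
    {p₀ p₁ q : PrimeSpectrum R} (hI : I ≤ p₀.asIdeal) (h₀₁ : p₀ < p₁) (h₁ : p₁ < q) :
    heightIdeal I + 2 ≤ Order.height q :=
  calc heightIdeal I + 2 ≤ Order.height p₀ + 1 + 1 := by
        rw [add_assoc, one_add_one_eq_two]; gcongr; exact iInf₂_le p₀ hI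
    _ ≤ Order.height p₁ + 1 := by gcongr; exact Order.height_add_one_le h₀₁
    _ ≤ Order.height q := Order.height_add_one_le h₁

theorem stmt15_general {n : ℕ} (K : Type*) [Field K] (G : SimpleGraph (Fin n))
    (S T : Finset (Fin n))
    (hdiff : 1 < (T \ S).card) :
    heightIdeal (PSIdeal K G S) + 2 ≤ heightIdeal (PSIdeal K G S + PSIdeal K G T) := by
  obtain ⟨i, hi, j, hj, hij⟩ := Finset.one_lt_card.mp hdiff
  rw [Finset.mem_sdiff] at hi hj
  refine le_iInf₂ fun q hq => ?_
  rw [Ideal.add_eq_sup, sup_le_iff, PSIdeal_eq_minorsIdeal, PSIdeal_eq_minorsIdeal] at hq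
  obtain ⟨hxT, hyT, -⟩ := minorsIdeal_le_iff.mp hq.2
  obtain ⟨p₁, _, hS₁, hp₁q, hp₁⟩ :=
    exists_isPrime_lt_of_X_mem hq.1 hj.2 (hxT j hj.1) (hyT j hj.1)
  obtain ⟨p₀, _, hS₀, hp₀₁, -⟩ := exists_isPrime_lt_of_X_mem hS₁ hi.2
    (hp₁ _ (by simpa using hij) (by simp) (hxT i hi.1))
    (hp₁ _ (by simp) (by simpa using hij) (hyT i hi.1))
  exact heightIdeal_add_two_le (p₀ := ⟨p₀, ‹_›⟩) (p₁ := ⟨p₁, ‹_›⟩) hS₀ hp₀₁ hp₁q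

theorem stmt15 {n : ℕ} (K : Type*) [Field K] (G : SimpleGraph (Fin n))
    (hunmixed : Unmixed G)
    (S T : Finset (Fin n)) (hS : IsCutSet G S) (hT : IsCutSet G T)
    (hcard : S.card ≤ T.card) (hdiff : 1 < (T \ S).card) :
    heightIdeal (PSIdeal K G S) + 2 ≤ heightIdeal (PSIdeal K G S + PSIdeal K G T) :=
  stmt15_general K G S T hdiff
end
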